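/- arXiv:2503.18650 — 2 statements merged into one kernel-verified Lean document; each statement's English description precedes it below -/
import Mathlib

section
/- Let a0,a1,a2,a3,a4 ≥ 2 be integers, d = 1 + a0 a1 a2 a3 a4, and let w0,...,w4 be positive integers satisfying a0 w0 + w4 = d, a1 w1 + w0 = d, a2 w2 + w1 = d, a3 w3 + w2 = d, a4 w4 + w3 = d. Then any two cyclically consecutive weights w_i and w_{i+1} (indices mod 5) are coprime. -/
/-- For a cycle-type polynomial whose link is a ℚ-homology 7-sphere
(`d = 1 + a0 a1 a2 a3 a4`, `gcd(d, w i) = 1`), cyclically consecutive weights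
are coprime. -/
theorem consecutive_weights_coprime (a w : Fin 5 → ℤ) (d : ℤ)
    (ha : ∀ i, 2 ≤ a i)
    (hw : ∀ i, 0 < w i)
    (hd : d = 1 + a 0 * a 1 * a 2 * a 3 * a 4)
    (hrel : ∀ i, a i * w i + w (i + 4) = d)
    (hgcd : ∀ i, Int.gcd d (w i) = 1) :
    ∀ i, Int.gcd (w i) (w (i + 1)) = 1 := by
  intro i
  have hidx : i + 1 + 4 = i := by
    rw [add_assoc]
    simp
  have key : a (i + 1) * w (i + 1) + w i = d := by
    have h := hrel (i + 1)
    rwa [hidx] at h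
  have hdvd : (Int.gcd (w i) (w (i + 1)) : ℤ) ∣ d := by
    rw [← key]
    exact dvd_add ((Int.gcd_dvd_right _ _).mul_left _) (Int.gcd_dvd_left _ _)
  have hone : (Int.gcd (w i) (w (i + 1)) : ℤ) ∣ 1 := by
    have := Int.dvd_coe_gcd hdvd (Int.gcd_dvd_left (w i) (w (i + 1)))
    rwa [hgcd i, Nat.cast_one] at this
  exact Nat.dvd_one.mp (Int.ofNat_dvd.mp (by exact_mod_cast hone))
end

section
/- Let w be a well-formed weight vector of degree d = m2 m3 (gcd(m2,m3)=1) admitting a type I polynomial z0^{a0} + z1^{a1} + cycle block with index I = |w| - d = 1. Then w0 = w1 = m3, a1 ≥ 3, and w also admits a type II polynomial: setting ã1 = a1 - 1 ≥ 2 one has w0 + ã1 w1 = d. -/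
/-- A well-formed weight vector of index 1 admitting a type I polynomial has
`w0 = w1 = m3`, `a1 ≥ 3`, and also admits a type II polynomial with
exponent `ã1 = a1 - 1 ≥ 2`. -/
theorem typeI_admits_typeII (m2 m3 v0 v1 v2 v3 v4 a0 a1 d : ℕ)
    (w : Fin 5 → ℕ)
    (hm : Nat.Coprime m2 m3) (hm2 : 2 ≤ m2) (hm3 : 2 ≤ m3)
    (hv0 : 0 < v0) (hv1 : 0 < v1) (hv2 : 0 < v2) (hv3 : 0 < v3) (hv4 : 0 < v4)
    (hw0 : w 0 = m3 * v0) (hw1 : w 1 = m3 * v1) (hw2 : w 2 = m2 * v2)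
    (hw3 : w 3 = m2 * v3) (hw4 : w 4 = m2 * v4)
    (hd : d = m2 * m3)
    (hcop01 : Nat.Coprime v0 v1) (hcop23 : Nat.Coprime v2 v3)
    (hcop24 : Nat.Coprime v2 v4) (hcop34 : Nat.Coprime v3 v4)
    (hwf : ∀ i : Fin 5, (Finset.univ.erase i).gcd w = 1)
    (hf0 : a0 * w 0 = d) (hf1 : a1 * w 1 = d)
    (hindex : w 0 + w 1 + w 2 + w 3 + w 4 = d + 1) :
    w 0 = m3 ∧ w 1 = m3 ∧ 3 ≤ a1 ∧ 2 ≤ a1 - 1 ∧ w 0 + (a1 - 1) * w 1 = d := by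
  have hm3pos : 0 < m3 := by omega
  -- a1 * v1 = m2 and a0 * v0 = m2
  have ha1 : a1 * v1 = m2 := by
    have h : m3 * (a1 * v1) = m3 * m2 := by
      rw [hw1, hd] at hf1
      calc m3 * (a1 * v1) = a1 * (m3 * v1) := by ring
        _ = m2 * m3 := hf1
        _ = m3 * m2 := by ring
    exact Nat.eq_of_mul_eq_mul_left hm3pos h
  have ha0 : a0 * v0 = m2 := by
    have h : m3 * (a0 * v0) = m3 * m2 := by
      rw [hw0, hd] at hf0
      calc m3 * (a0 * v0) = a0 * (m3 * v0) := by ring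
        _ = m2 * m3 := hf0
        _ = m3 * m2 := by ring
    exact Nat.eq_of_mul_eq_mul_left hm3pos h
  have hv1m2 : v1 ∣ m2 := Dvd.intro_left a1 ha1
  have hv0m2 : v0 ∣ m2 := Dvd.intro_left a0 ha0
  -- v1 = 1 from well-formedness (erase 0)
  have hv1one : v1 = 1 := by
    have hdvd : v1 ∣ (Finset.univ.erase (0 : Fin 5)).gcd w := by
      apply Finset.dvd_gcd
      intro i hi
      fin_cases i
      · simp at hi
      · show v1 ∣ w 1; rw [hw1]; exact Dvd.dvd.mul_left dvd_rfl m3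
      · show v1 ∣ w 2; rw [hw2]; exact Dvd.dvd.mul_right hv1m2 v2
      · show v1 ∣ w 3; rw [hw3]; exact Dvd.dvd.mul_right hv1m2 v3
      · show v1 ∣ w 4; rw [hw4]; exact Dvd.dvd.mul_right hv1m2 v4
    rw [hwf 0] at hdvd
    exact Nat.eq_one_of_dvd_one hdvd
  have hv0one : v0 = 1 := by
    have hdvd : v0 ∣ (Finset.univ.erase (1 : Fin 5)).gcd w := by
      apply Finset.dvd_gcd
      intro i hi
      fin_cases i
      · show v0 ∣ w 0; rw [hw0]; exact Dvd.dvd.mul_left dvd_rfl m3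
      · simp at hi
      · show v0 ∣ w 2; rw [hw2]; exact Dvd.dvd.mul_right hv0m2 v2
      · show v0 ∣ w 3; rw [hw3]; exact Dvd.dvd.mul_right hv0m2 v3
      · show v0 ∣ w 4; rw [hw4]; exact Dvd.dvd.mul_right hv0m2 v4
    rw [hwf 1] at hdvd
    exact Nat.eq_one_of_dvd_one hdvd
  have hw0' : w 0 = m3 := by rw [hw0, hv0one, mul_one]
  have hw1' : w 1 = m3 := by rw [hw1, hv1one, mul_one]
  have ha1m2 : a1 = m2 := by rw [hv1one, mul_one] at ha1; exact ha1
  -- m2 ≥ 3 from the index-1 equation (parity argument)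
  have hm2ge3 : 3 ≤ m2 := by
    by_contra h
    have hm2eq : m2 = 2 := by omega
    rw [hw0', hw1', hw2, hw3, hw4, hd, hm2eq] at hindex
    omega
  have ha13 : 3 ≤ a1 := by omega
  refine ⟨hw0', hw1', ha13, by omega, ?_⟩
  obtain ⟨k, rfl⟩ : ∃ k, a1 = k + 1 := ⟨a1 - 1, by omega⟩
  rw [hw0', hw1', hd, ← ha1m2, Nat.add_sub_cancel]
  ring
end
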